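/- Let $w : \mathbb{R} \to \mathbb{R}$ be twice differentiable with $0 < L \leq w \leq U$ and $|w''| \leq M$ everywhere. Let $\tau_0 > 0$, $\omega > 0$, $\sigma^2 = \omega^2 \tau$, and $Q(x;\tau) = \frac{\int k_{\sqrt{2\tau}\omega}(y;x) w(y)\,dy}{\int k_{\sqrt{\tau}\omega}(y;x) w(y)\,dy}$. If $\tau_0 < \frac{2L}{M\omega^2}$, then there exists a constant $C_1 > 0$ (one may take $C_1 = \max(\frac{M\omega^2}{2L - M\omega^2\tau_0}, \frac{3M\omega^2}{2L}))$ such that $|Q(x;\tau) - 1| \leq C_1 \tau$ for all $x \in \mathbb{R}$ and $0 < \tau < \tau_0$. -/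

import Mathlib

/-
Averaging `w` against any probability measure with mean `m` and variance `v` moves `w m` by at
most `M v / 2`: the remainder of the first-order Taylor expansion at `m` is at most
`M / 2 * (y - m) ^ 2`, and the linear term integrates to zero. For the two Gaussian kernels of `Q`
this puts numerator and denominator within `M ω² τ` and `M ω² τ / 2` of `w x`, and the
denominator stays above `L - M ω² τ₀ / 2`, which is positive exactly when `τ₀ < 2 L / (M ω²)`.
-/

open MeasureTheory Real

/-- Gaussian density with mean `m` and standard deviation `σ`, evaluated at `y`. -/
noncomputable def gauss (σ m y : ℝ) : ℝ :=
  (Real.sqrt (2 * Real.pi) * σ)⁻¹ * Real.exp (-(y - m) ^ 2 / (2 * σ ^ 2))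

/-- The ratio `Q(x; τ)` with kernel standard deviation `σ(τ) = ω √τ`. -/
noncomputable def Qfun (w : ℝ → ℝ) (ω τ x : ℝ) : ℝ :=
  (∫ y : ℝ, gauss (Real.sqrt (2 * τ) * ω) x y * w y) /
    ∫ y : ℝ, gauss (Real.sqrt τ * ω) x y * w y

open ProbabilityTheory Set

section

variable {w w' w'' : ℝ → ℝ} {M : ℝ}

theorem abs_sub_sub_mul_sub_le_of_le (hw' : ∀ x, HasDerivAt w (w' x) x)
    (hw'' : ∀ x, HasDerivAt w' (w'' x) x) (hM : ∀ x, |w'' x| ≤ M) {x y : ℝ} (hxy : x ≤ y) :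
    |w y - w x - w' x * (y - x)| ≤ M / 2 * (y - x) ^ 2 := by
  have hw'_lip : ∀ t ∈ Icc x y, ‖w' t - w' x‖ ≤ M * (t - x) :=
    norm_image_sub_le_of_norm_deriv_right_le_segment
      (fun t _ ↦ (hw'' t).continuousAt.continuousWithinAt)
      (fun t _ ↦ (hw'' t).hasDerivWithinAt) (fun t _ ↦ hM t)
  have hr : ∀ t, HasDerivAt (fun t ↦ w t - w x - w' x * (t - x)) (w' t - w' x) t := fun t ↦ by
    simpa using ((hw' t).sub_const (w x)).fun_sub (((hasDerivAt_id t).sub_const x).const_mul (w' x))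
  have hB : ∀ t, HasDerivAt (fun t ↦ M / 2 * (t - x) ^ 2) (M * (t - x)) t := fun t ↦
    ((((hasDerivAt_id' t).sub_const x).fun_pow 2).const_mul (M / 2)).congr_deriv
      (by norm_num; ring)
  exact image_norm_le_of_norm_deriv_right_le_deriv_boundary
    (fun t _ ↦ (hr t).continuousAt.continuousWithinAt) (fun t _ ↦ (hr t).hasDerivWithinAt)
    (by simp) hB (fun t ht ↦ hw'_lip t (Ico_subset_Icc_self ht)) ⟨hxy, le_rfl⟩

theorem abs_sub_sub_mul_sub_le (hw' : ∀ x, HasDerivAt w (w' x) x)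
    (hw'' : ∀ x, HasDerivAt w' (w'' x) x) (hM : ∀ x, |w'' x| ≤ M) (x y : ℝ) :
    |w y - w x - w' x * (y - x)| ≤ M / 2 * (y - x) ^ 2 := by
  rcases le_total x y with hxy | hyx
  · exact abs_sub_sub_mul_sub_le_of_le hw' hw'' hM hxy
  · have hv' : ∀ t, HasDerivAt (fun t ↦ w (-t)) (-w' (-t)) t := fun t ↦ by
      simpa [Function.comp_def] using (hw' (-t)).comp t (hasDerivAt_neg t)
    have hv'' : ∀ t, HasDerivAt (fun t ↦ -w' (-t)) (w'' (-t)) t := fun t ↦ by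
      simpa [Function.comp_def] using ((hw'' (-t)).comp t (hasDerivAt_neg t)).fun_neg
    have h := abs_sub_sub_mul_sub_le_of_le hv' hv'' (fun t ↦ hM (-t)) (neg_le_neg hyx)
    simp only [neg_neg] at h
    convert h using 2 <;> ring

theorem integral_gauss_mul {σ : ℝ} (hσ : 0 < σ) (m : ℝ) (f : ℝ → ℝ) :
    ∫ y, gauss σ m y * f y = ∫ y, f y ∂gaussianReal m (σ ^ 2).toNNReal := by
  have hv : (σ ^ 2).toNNReal ≠ 0 := by simpa using hσ.ne'
  have hpdf : gauss σ m = gaussianPDFReal m (σ ^ 2).toNNReal := by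
    ext y
    rw [gaussianPDFReal, gauss, Real.coe_toNNReal _ (sq_nonneg σ), Real.sqrt_mul' _ (sq_nonneg σ),
      Real.sqrt_sq hσ.le]
  simp [integral_gaussianReal_eq_integral_smul hv, hpdf]

theorem abs_integral_sub_apply_integral_id_le {μ : Measure ℝ} [IsProbabilityMeasure μ]
    (hμ : MemLp id 2 μ) (hw' : ∀ x, HasDerivAt w (w' x) x)
    (hw'' : ∀ x, HasDerivAt w' (w'' x) x) (hM : ∀ x, |w'' x| ≤ M) :
    |∫ y, w y ∂μ - w (∫ y, y ∂μ)| ≤ M / 2 * Var[id; μ] := by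
  set m := ∫ y, y ∂μ
  have hid : Integrable (fun y ↦ y) μ := hμ.integrable one_le_two
  have hsq : Integrable (fun y ↦ (y - m) ^ 2) μ := (hμ.sub (memLp_const m)).integrable_sq
  have hlin : Integrable (fun y ↦ w' m * (y - m)) μ := (hid.sub (integrable_const m)).const_mul _
  have hrem : ∀ y, ‖w y - w m - w' m * (y - m)‖ ≤ M / 2 * (y - m) ^ 2 :=
    abs_sub_sub_mul_sub_le hw' hw'' hM m
  have hw : Continuous w := continuous_iff_continuousAt.2 fun x ↦ (hw' x).continuousAt
  have hr : Integrable (fun y ↦ w y - w m - w' m * (y - m)) μ :=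
    (hsq.const_mul (M / 2)).mono' (by fun_prop) (ae_of_all _ hrem)
  have hwμ : Integrable w μ :=
    ((hr.fun_add hlin).fun_add (integrable_const (w m))).congr (ae_of_all _ fun y ↦ by simp)
  have hmean : ∫ y, w y ∂μ - w m = ∫ y, w y - w m - w' m * (y - m) ∂μ := by
    rw [integral_sub (hwμ.sub' (integrable_const _)) hlin, integral_sub hwμ (integrable_const _),
      integral_const_mul, integral_sub hid (integrable_const m)]
    simp [m]
  rw [hmean, variance_eq_integral measurable_id.aemeasurable, ← integral_const_mul]
  exact norm_integral_le_of_norm_le (hsq.const_mul _) (ae_of_all _ hrem)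

theorem abs_integral_gauss_mul_sub_le (hw' : ∀ x, HasDerivAt w (w' x) x)
    (hw'' : ∀ x, HasDerivAt w' (w'' x) x) (hM : ∀ x, |w'' x| ≤ M) {σ : ℝ} (hσ : 0 < σ) (x : ℝ) :
    |(∫ y, gauss σ x y * w y) - w x| ≤ M / 2 * σ ^ 2 := by
  have h := abs_integral_sub_apply_integral_id_le
    (μ := gaussianReal x (σ ^ 2).toNNReal) (memLp_id_gaussianReal 2) hw' hw'' hM
  rwa [integral_id_gaussianReal, variance_id_gaussianReal, Real.coe_toNNReal _ (sq_nonneg σ),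
    ← integral_gauss_mul hσ] at h

theorem abs_div_sub_one_le {N D a ε δ d : ℝ} (hN : |N - a| ≤ ε) (hD : |D - a| ≤ δ) (hd : 0 < d)
    (hdD : d ≤ D) : |N / D - 1| ≤ (ε + δ) / d := by
  have hND : |N - D| ≤ ε + δ := by
    linarith [abs_sub_le N a D, abs_sub_comm a D]
  rw [div_sub_one (hd.trans_le hdD).ne', abs_div, abs_of_pos (hd.trans_le hdD)]
  exact div_le_div₀ ((abs_nonneg _).trans hND) hND hd hdD

end

theorem Q_order_tau (w w' w'' : ℝ → ℝ) (L U M ω τ₀ : ℝ)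
    (hw' : ∀ x, HasDerivAt w (w' x) x)
    (hw'' : ∀ x, HasDerivAt w' (w'' x) x)
    (hM : ∀ x, |w'' x| ≤ M)
    (hL : 0 < L) (hLU : ∀ x, L ≤ w x ∧ w x ≤ U)
    (hω : 0 < ω) (hτ₀ : 0 < τ₀) (hτ₀small : τ₀ < 2 * L / (M * ω ^ 2)) :
    ∃ C₁ > 0, ∀ x : ℝ, ∀ τ : ℝ, 0 < τ → τ < τ₀ →
      |Qfun w ω τ x - 1| ≤ C₁ * τ := by
  have hMω : 0 < M * ω ^ 2 := by
    by_contra! h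
    linarith [div_nonpos_of_nonneg_of_nonpos (by positivity : 0 ≤ 2 * L) h]
  set d := L - M * ω ^ 2 * τ₀ / 2 with hd_def
  have hd : 0 < d := by rw [hd_def]; linarith [(lt_div_iff₀ hMω).mp hτ₀small]
  refine ⟨3 * (M * ω ^ 2) / (2 * d), by positivity, fun x τ hτ hττ₀ ↦ ?_⟩
  have hN := abs_integral_gauss_mul_sub_le hw' hw'' hM (σ := √(2 * τ) * ω) (by positivity) x
  have hD := abs_integral_gauss_mul_sub_le hw' hw'' hM (σ := √τ * ω) (by positivity) x
  rw [mul_pow, sq_sqrt (by positivity)] at hN hD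
  have hdD : d ≤ ∫ y, gauss (√τ * ω) x y * w y := by
    rw [hd_def]
    linarith [(abs_le.mp hD).1, (hLU x).1, mul_lt_mul_of_pos_left hττ₀ hMω]
  calc |Qfun w ω τ x - 1| ≤ (M / 2 * (2 * τ * ω ^ 2) + M / 2 * (τ * ω ^ 2)) / d :=
        abs_div_sub_one_le hN hD hd hdD
    _ = 3 * (M * ω ^ 2) / (2 * d) * τ := by field_simp; ring
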